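/- Let N, M ≥ 2 be integers, P > 0, α > 0, φ, f, t ∈ ℝ, and let I(θ) be the 4×4 real matrix with entries [I(θ)]_{jk} = 2 Re Σ_{n=0}^{N−1} Σ_{m=0}^{M−1} conj(∂s_{n,m}/∂θ_j)·(∂s_{n,m}/∂θ_k), where s_{n,m}(θ) = √P·α·exp(i(φ + 2πnf − 2πmt)) and θ = (α, φ, f, t). Then I(θ) is symmetric positive definite. -/

import Mathlib

open Real Finset

/-- The noiseless OFDM radar observation `s_{n,m}(α,φ,f,t) = √P·α·exp(i(φ + 2πnf − 2πmt))`. -/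
noncomputable def ofdmSig (P : ℝ) (α φ f t : ℝ) (n m : ℕ) : ℂ :=
  (Real.sqrt P : ℂ) * (α : ℂ) *
    Complex.exp (Complex.I * ((φ : ℂ) + 2 * (π : ℂ) * (n : ℂ) * (f : ℂ)
      - 2 * (π : ℂ) * (m : ℂ) * (t : ℂ)))

/-- Partial derivative of `s_{n,m}` with respect to the `j`-th parameter of
`θ = (α, φ, f, t)`. -/
noncomputable def ofdmDs (P : ℝ) (α φ f t : ℝ) (j : Fin 4) (n m : ℕ) : ℂ :=
  match j with
  | 0 => deriv (fun a : ℝ => ofdmSig P a φ f t n m) α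
  | 1 => deriv (fun p : ℝ => ofdmSig P α p f t n m) φ
  | 2 => deriv (fun fr : ℝ => ofdmSig P α φ fr t n m) f
  | 3 => deriv (fun ti : ℝ => ofdmSig P α φ f ti n m) t

/-- The 4×4 Fisher information matrix
`[I(θ)]_{jk} = 2 Re Σ_{n,m} conj(∂s_{n,m}/∂θ_j)·(∂s_{n,m}/∂θ_k)`. -/
noncomputable def ofdmFisher (N M : ℕ) (P : ℝ) (α φ f t : ℝ) :
    Matrix (Fin 4) (Fin 4) ℝ :=
  Matrix.of fun j k =>
    2 * (∑ n ∈ Finset.range N, ∑ m ∈ Finset.range M,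
      (starRingEnd ℂ) (ofdmDs P α φ f t j n m) * ofdmDs P α φ f t k n m).re

/-! The score vectors `∂ⱼs = cⱼ(n, m) · √P · e^{i(φ + 2πnf − 2πmt)}` have coefficients
`c = (1, iα, 2πinα, −2πimα)`, so the Fisher matrix is twice the real Gram matrix of the
four score vectors in `ℂ^{N×M}`, and it is positive definite as soon as they are linearly
independent over `ℝ`. A real combination `∑ xⱼ cⱼ(n, m) = x₀ + iα(x₁ + 2πn x₂ − 2πm x₃)`
vanishing at the samples `(0,0)`, `(1,0)` and `(0,1)` already forces `x = 0`. -/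

section RealGram

variable {ι κ : Type*} [Fintype ι] [Finite κ]

theorem Matrix.posDef_re_gram_of_linearIndependent {u : κ → ι → ℂ}
    (hu : LinearIndependent ℝ u) :
    (Matrix.of fun j k => (∑ i, (starRingEnd ℂ) (u j i) * u k i).re).PosDef := by
  have hgram : (Matrix.of fun j k => (∑ i, (starRingEnd ℂ) (u j i) * u k i).re) =
      Matrix.gram ℝ (fun j => WithLp.toLp 2 (u j)) := by
    ext j k
    rw [Matrix.of_apply, Matrix.gram_apply, PiLp.inner_apply, Complex.re_sum]
    refine Finset.sum_congr rfl fun i _ => ?_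
    rw [Complex.inner, mul_comm]
  rw [hgram]
  exact Matrix.posDef_gram_of_linearIndependent
    (hu.map' (WithLp.linearEquiv 2 ℝ (ι → ℂ)).symm.toLinearMap (LinearEquiv.ker _))

end RealGram

noncomputable def ofdmCarrier (φ f t : ℝ) (n m : ℕ) : ℂ :=
  Complex.exp (Complex.I * ((φ : ℂ) + 2 * (π : ℂ) * (n : ℂ) * (f : ℂ)
    - 2 * (π : ℂ) * (m : ℂ) * (t : ℂ)))

noncomputable def ofdmCoeff (α : ℝ) (n m : ℕ) : Fin 4 → ℂ :=
  ![1, Complex.I * α, Complex.I * α * (2 * π * n), -(Complex.I * α * (2 * π * m))]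

theorem ofdmDs_eq (P α φ f t : ℝ) (j : Fin 4) (n m : ℕ) :
    ofdmDs P α φ f t j n m = ofdmCoeff α n m j * (Real.sqrt P * ofdmCarrier φ f t n m) := by
  have hphase {g : ℝ → ℂ} {g' : ℂ} {x : ℝ} (hg : HasDerivAt g g' x) :
      HasDerivAt (fun y => (Real.sqrt P : ℂ) * α * Complex.exp (Complex.I * g y))
        ((Real.sqrt P : ℂ) * α * (Complex.exp (Complex.I * g x) * (Complex.I * g'))) x :=
    ((hg.const_mul Complex.I).cexp).const_mul _
  have hcoe (x : ℝ) : HasDerivAt (fun y : ℝ => (y : ℂ)) 1 x := Complex.ofRealCLM.hasDerivAt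
  fin_cases j
  · exact (((hcoe α).const_mul _).mul_const _).deriv.trans (by simp [ofdmCoeff, ofdmCarrier])
  · refine (hphase (((hcoe φ).add_const _).sub_const _)).deriv.trans ?_
    simp [ofdmCoeff, ofdmCarrier]; ring
  · refine (hphase ((((hcoe f).const_mul _).const_add _).sub_const _)).deriv.trans ?_
    simp [ofdmCoeff, ofdmCarrier]; ring
  · refine (hphase (((hcoe t).const_mul _).const_sub _)).deriv.trans ?_
    simp [ofdmCoeff, ofdmCarrier]; ring

theorem sum_mul_ofdmCoeff (α : ℝ) (n m : ℕ) (x : Fin 4 → ℝ) :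
    ∑ j, (x j : ℂ) * ofdmCoeff α n m j =
      ⟨x 0, α * (x 1 + 2 * π * n * x 2 - 2 * π * m * x 3)⟩ := by
  rw [Complex.mk_eq_add_mul_I]
  simp [Fin.sum_univ_four, ofdmCoeff]
  ring

theorem ofdm_combination_eq_zero {P α : ℝ} (hP : 0 < P) (hα : 0 < α) {φ f t : ℝ} {n m : ℕ}
    {x : Fin 4 → ℝ} (h : ∑ j, x j • ofdmDs P α φ f t j n m = 0) :
    x 0 = 0 ∧ x 1 + 2 * π * n * x 2 - 2 * π * m * x 3 = 0 := by
  have hfactor : (∑ j, (x j : ℂ) * ofdmCoeff α n m j) *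
      ((Real.sqrt P : ℂ) * ofdmCarrier φ f t n m) = 0 := by
    simpa [Finset.sum_mul, mul_assoc, ofdmDs_eq] using h
  have hcarrier : (Real.sqrt P : ℂ) * ofdmCarrier φ f t n m ≠ 0 :=
    mul_ne_zero (by exact_mod_cast (Real.sqrt_pos.2 hP).ne') (Complex.exp_ne_zero _)
  have hcomb := (mul_eq_zero.1 hfactor).resolve_right hcarrier
  rw [sum_mul_ofdmCoeff] at hcomb
  obtain ⟨hre, him⟩ := Complex.ext_iff.1 hcomb
  exact ⟨hre, (mul_eq_zero.1 him).resolve_left hα.ne'⟩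

theorem linearIndependent_ofdmDs {N M : ℕ} (hN : 2 ≤ N) (hM : 2 ≤ M) {P : ℝ} (hP : 0 < P)
    {α : ℝ} (hα : 0 < α) (φ f t : ℝ) :
    LinearIndependent ℝ (fun j (p : Fin N × Fin M) => ofdmDs P α φ f t j p.1 p.2) := by
  rw [Fintype.linearIndependent_iff]
  intro x hx
  have hsample (n m : ℕ) (hn : n < N) (hm : m < M) :=
    ofdm_combination_eq_zero hP hα (by simpa using congr_fun hx (⟨n, hn⟩, ⟨m, hm⟩))
  obtain ⟨hx0, hx1⟩ := hsample 0 0 (by omega) (by omega)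
  have hx2 := (hsample 1 0 (by omega) (by omega)).2
  have hx3 := (hsample 0 1 (by omega) (by omega)).2
  simp only [Nat.cast_zero, Nat.cast_one, mul_zero, zero_mul, mul_one, add_zero, sub_zero]
    at hx1 hx2 hx3
  have hπ : 2 * π ≠ 0 := by positivity
  intro j
  fin_cases j
  · exact hx0
  · exact hx1
  · simpa [hx1, hπ] using hx2
  · simpa [hx1, hπ] using hx3

/-- The Fisher information matrix of the constant-envelope OFDM radar model with
parameters `θ = (α, φ, f, t)` is symmetric positive definite (hence invertible,
so the Cramér-Rao lower bound is well defined). -/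
theorem ofdm_fisher_posDef
    (N M : ℕ) (hN : 2 ≤ N) (hM : 2 ≤ M) (P : ℝ) (hP : 0 < P)
    (α : ℝ) (hα : 0 < α) (φ f t : ℝ) :
    (ofdmFisher N M P α φ f t).PosDef := by
  have hfisher : ofdmFisher N M P α φ f t = (2 : ℝ) • Matrix.of fun j k =>
      (∑ p : Fin N × Fin M, (starRingEnd ℂ) (ofdmDs P α φ f t j p.1 p.2) *
        ofdmDs P α φ f t k p.1 p.2).re := by
    ext j k
    simp only [ofdmFisher, Matrix.of_apply, Matrix.smul_apply, smul_eq_mul,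
      Fintype.sum_prod_type, Finset.sum_range]
  rw [hfisher]
  exact (Matrix.posDef_re_gram_of_linearIndependent
    (linearIndependent_ofdmDs hN hM hP hα φ f t)).smul two_pos
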